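/- arXiv:gr-qc/0306102 — 5 statements merged into one kernel-verified Lean document; each statement's English description precedes it below -/
import Mathlib

section
/- In a k-graded algebra (E, ∘), for a p-graded endomorphism P and a q-graded endomorphism Q with graded commutator [P,Q] = PQ − (-1)^{pq}QP, the Leibniz bracket of the commutator satisfies L_{[P,Q]}⟨∘⟩ = L_Q⟨L_P⟨∘⟩⟩ − (-1)^{pq} L_P⟨L_Q⟨∘⟩⟩. -/
/-- The sign `(-1)^m` for an integer `m`. -/
def sg (m : ℤ) : ℤ := ((Int.negOnePow m : ℤˣ) : ℤ)

/-- The Leibniz bracket of a `p`-graded operator `P` with respect to a degree-indexed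
operation `op` of degree `k`. -/
def lb {M : Type*} [AddCommGroup M] (k p : ℤ) (P : M → M)
    (op : ℤ → M → M → M) : ℤ → M → M → M :=
  fun a A B => op a A (P B) + sg (p * (a + k)) • (op (a + p) (P A) B - P (op a A B))

/-- Theorem 1: in a `k`-graded algebra `(E, ∘)`, for a `p`-graded endomorphism `P` and a
`q`-graded endomorphism `Q` with graded commutator `[P,Q] = PQ − (-1)^{pq} QP`,
`L_{[P,Q]}⟨∘⟩ = L_Q⟨L_P⟨∘⟩⟩ − (-1)^{pq} L_P⟨L_Q⟨∘⟩⟩` (on homogeneous elements). -/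
theorem leibniz_bracket_commutator {R M : Type*} [CommRing R] [AddCommGroup M] [Module R M]
    (ℰ : ℤ → Submodule R M) (k p q : ℤ)
    (mul : M →ₗ[R] M →ₗ[R] M)
    (hmul : ∀ (a b : ℤ) (A B : M), A ∈ ℰ a → B ∈ ℰ b → mul A B ∈ ℰ (a + b + k))
    (P : M →ₗ[R] M) (hP : ∀ (a : ℤ) (A : M), A ∈ ℰ a → P A ∈ ℰ (a + p))
    (Q : M →ₗ[R] M) (hQ : ∀ (a : ℤ) (A : M), A ∈ ℰ a → Q A ∈ ℰ (a + q)) :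
    ∀ (a : ℤ) (A B : M), A ∈ ℰ a →
      lb k (p + q) (fun x => P (Q x) - sg (p * q) • Q (P x)) (fun _ x y => mul x y) a A B
        = lb (k + p) q Q (lb k p P (fun _ x y => mul x y)) a A B
          - sg (p * q) • lb (k + q) p P (lb k q Q (fun _ x y => mul x y)) a A B := by
  intro a A B _
  have sgadd : ∀ m n : ℤ, sg (m + n) = sg m * sg n := by
    intro m n
    simp [sg, Int.negOnePow_add, Units.val_mul]
  have hsg : sg (p * q) = 1 ∨ sg (p * q) = -1 := by
    rcases Int.units_eq_one_or (Int.negOnePow (p * q)) with h | h <;>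
      simp [sg, h]
  simp only [lb, map_add, map_sub, map_smul, map_zsmul, LinearMap.add_apply, LinearMap.sub_apply,
    LinearMap.smul_apply, smul_sub, smul_add]
  rw [show (p + q) * (a + k) = p * (a + k) + q * (a + k) from by ring,
    show q * (a + (k + p)) = q * (a + k) + p * q from by ring,
    show p * (a + q + k) = p * (a + k) + p * q from by ring,
    show p * (a + (k + q)) = p * (a + k) + p * q from by ring,
    show q * (a + p + k) = q * (a + k) + p * q from by ring]
  simp only [sgadd]
  rcases hsg with h | h <;> rw [h] <;> simp only [one_smul, neg_smul, smul_neg, smul_smul] <;> module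
end

section
/- For any endomorphism P of odd degree p on a k-graded algebra (E, ∘), the Leibniz bracket of P² satisfies L_{P²}⟨∘⟩ = L_P⟨L_P⟨∘⟩⟩. -/
/-- For any endomorphism `P` of odd degree `p` on a `k`-graded algebra `(E, ∘)`,
`L_{P²}⟨∘⟩ = L_P⟨L_P⟨∘⟩⟩` (on homogeneous elements). -/
theorem leibniz_bracket_square {R M : Type*} [CommRing R] [AddCommGroup M] [Module R M]
    (ℰ : ℤ → Submodule R M) (k p : ℤ) (hp : Odd p)
    (mul : M →ₗ[R] M →ₗ[R] M)
    (hmul : ∀ (a b : ℤ) (A B : M), A ∈ ℰ a → B ∈ ℰ b → mul A B ∈ ℰ (a + b + k))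
    (P : M →ₗ[R] M) (hP : ∀ (a : ℤ) (A : M), A ∈ ℰ a → P A ∈ ℰ (a + p)) :
    ∀ (a : ℤ) (A B : M), A ∈ ℰ a →
      lb k (2 * p) (fun x => P (P x)) (fun _ x y => mul x y) a A B
        = lb (k + p) p P (lb k p P (fun _ x y => mul x y)) a A B := by
  intro a A B _
  have he : Even (2 * p * (a + k)) := ⟨p * (a + k), by ring⟩
  have h1 : sg (2 * p * (a + k)) = 1 := by
    simp [sg, Int.negOnePow_even _ he]
  have key : ∀ m : ℤ, m = p * (a + k) + p * p →
      sg m = -sg (p * (a + k)) := by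
    intro m hm
    rw [sg, sg, hm, Int.negOnePow_add, Int.negOnePow_odd _ (hp.mul hp)]
    push_cast
    ring
  have h2 := key (p * (a + (k + p))) (by ring)
  have h3 := key (p * (a + p + k)) (by ring)
  simp only [lb, h1, h2, h3, one_smul]
  rcases Int.units_eq_one_or (Int.negOnePow (p * (a + k))) with h | h <;>
    simp only [sg, h, Units.val_one, Units.val_neg, one_smul, neg_smul, neg_neg,
      map_add, map_sub, map_neg, smul_sub, smul_add, smul_neg] <;>
    abel
end

section
/- Let (E, ∘) be a k-graded algebra with A ∘ B = ε(-1)^{(a+k)(b+k)} B ∘ A (ε = ±1, i.e. graded commutative or anticommutative), and P a p-graded endomorphism. Then the Leibniz bracket satisfies L_P⟨∘⟩(A,B) = ε(-1)^{(a+k+p)(b+k+p)+p} L_P⟨∘⟩(B,A). In particular, if (E,∘) is graded commutative and P has odd degree, then the Leibniz algebra (E, L_P⟨∘⟩) is graded anticommutative for its (k+p)-graded structure. -/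
lemma sg_mul_sg (m n : ℤ) : sg m * sg n = sg (m + n) := by
  simp [sg, Int.negOnePow_add]

lemma sg_congr {m n : ℤ} (h : Even (m - n)) : sg m = sg n := by
  have : Int.negOnePow m = Int.negOnePow n := by
    rw [show m = n + (m - n) by ring, Int.negOnePow_add, Int.negOnePow_even _ h, mul_one]
  simp [sg, this]

/-- If `(E, ∘)` is a `k`-graded algebra with `A ∘ B = ε(-1)^{(a+k)(b+k)} B ∘ A` (ε = ±1)
and `P` is a `p`-graded endomorphism, then
`L_P⟨∘⟩(A,B) = ε(-1)^{(a+k+p)(b+k+p)+p} L_P⟨∘⟩(B,A)`.  In particular, if `(E,∘)` is graded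
commutative (ε = 1) and `p` is odd, the Leibniz algebra `(E, L_P⟨∘⟩)` is graded
anticommutative for its `(k+p)`-graded structure. -/
theorem leibniz_bracket_comm {R M : Type*} [CommRing R] [AddCommGroup M] [Module R M]
    (ℰ : ℤ → Submodule R M) (k p : ℤ) (ε : ℤ) (hε : ε = 1 ∨ ε = -1)
    (mul : M →ₗ[R] M →ₗ[R] M)
    (hmul : ∀ (a b : ℤ) (A B : M), A ∈ ℰ a → B ∈ ℰ b → mul A B ∈ ℰ (a + b + k))
    (hcomm : ∀ (a b : ℤ) (A B : M), A ∈ ℰ a → B ∈ ℰ b →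
      mul A B = ε • sg ((a + k) * (b + k)) • mul B A)
    (P : M →ₗ[R] M) (hP : ∀ (a : ℤ) (A : M), A ∈ ℰ a → P A ∈ ℰ (a + p)) :
    (∀ (a b : ℤ) (A B : M), A ∈ ℰ a → B ∈ ℰ b →
      lb k p P (fun _ x y => mul x y) a A B
        = ε • sg ((a + k + p) * (b + k + p) + p) • lb k p P (fun _ x y => mul x y) b B A)
    ∧ (ε = 1 → Odd p → ∀ (a b : ℤ) (A B : M), A ∈ ℰ a → B ∈ ℰ b →
      lb k p P (fun _ x y => mul x y) a A B
        = -(sg ((a + k + p) * (b + k + p)) • lb k p P (fun _ x y => mul x y) b B A)) := by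

  have key : ∀ (a b : ℤ) (A B : M), A ∈ ℰ a → B ∈ ℰ b →
      lb k p P (fun _ x y => mul x y) a A B
        = ε • sg ((a + k + p) * (b + k + p) + p) • lb k p P (fun _ x y => mul x y) b B A := by
    intro a b A B hA hB
    simp only [lb]
    rw [hcomm a (b + p) A (P B) hA (hP b B hB),
        hcomm (a + p) b (P A) B (hP a A hA) hB,
        hcomm a b A B hA hB]
    rw [map_zsmul, map_zsmul]
    have hX : sg ((a + k) * (b + p + k))
        = sg ((a + k + p) * (b + k + p) + p) * sg (p * (b + k)) := by
      rw [sg_mul_sg]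
      apply sg_congr
      obtain ⟨c, hc⟩ := Int.even_mul_succ_self p
      exact ⟨-(p * (b + k)) - c, by linear_combination -hc⟩
    have hY : sg (p * (a + k)) * sg ((a + p + k) * (b + k))
        = sg ((a + k + p) * (b + k + p) + p) := by
      rw [sg_mul_sg]
      apply sg_congr
      obtain ⟨c, hc⟩ := Int.even_mul_succ_self p
      exact ⟨-c, by linear_combination -hc⟩
    have hZ : sg (p * (a + k)) * sg ((a + k) * (b + k))
        = sg ((a + k + p) * (b + k + p) + p) * sg (p * (b + k)) := by
      rw [sg_mul_sg, sg_mul_sg]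
      apply sg_congr
      obtain ⟨c, hc⟩ := Int.even_mul_succ_self p
      exact ⟨-(p * (b + k)) - c, by linear_combination -hc⟩
    match_scalars
    · linear_combination (ε : ℤ) * hX
    · linear_combination (ε : ℤ) * hY
    · linear_combination -(ε : ℤ) * hZ
  refine ⟨key, ?_⟩
  intro hε1 hodd a b A B hA hB
  rw [key a b A B hA hB, hε1, one_smul,
      show (a + k + p) * (b + k + p) + p = p + (a + k + p) * (b + k + p) by ring,
      ← sg_mul_sg, show sg p = -1 by simp [sg, Int.negOnePow_odd _ hodd],
      neg_one_mul, neg_smul]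
end

section
/- The square P² of an endomorphism P of odd degree p on a graded algebra (E, ∘) is a derivation on (E, ∘) if and only if P is a derivation on the Leibniz algebra (E, L_P⟨∘⟩). -/
/-- `D` is a derivation of degree `r` on the degree-indexed operation `op` of degree `k`,
relative to the grading `ℰ`:  `D(A ∘ B) = D(A) ∘ B + (-1)^{(a+k)r} A ∘ D(B)` for `A ∈ ℰ a`. -/
def IsDeriv {R M : Type*} [CommRing R] [AddCommGroup M] [Module R M]
    (ℰ : ℤ → Submodule R M) (k r : ℤ) (op : ℤ → M → M → M) (D : M → M) : Prop :=
  ∀ (a : ℤ) (A B : M), A ∈ ℰ a →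
    D (op a A B) = op (a + r) (D A) B + sg ((a + k) * r) • op a A (D B)

/-- Lemma 1: the square `P²` of an endomorphism `P` of odd degree `p` on a `k`-graded
algebra `(E, ∘)` is a derivation on `(E, ∘)` iff `P` is a derivation on the Leibniz
algebra `(E, L_P⟨∘⟩)`. -/
theorem square_deriv_iff {R M : Type*} [CommRing R] [AddCommGroup M] [Module R M]
    (ℰ : ℤ → Submodule R M) (k p : ℤ) (hp : Odd p)
    (mul : M →ₗ[R] M →ₗ[R] M)
    (hmul : ∀ (a b : ℤ) (A B : M), A ∈ ℰ a → B ∈ ℰ b → mul A B ∈ ℰ (a + b + k))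
    (P : M →ₗ[R] M) (hP : ∀ (a : ℤ) (A : M), A ∈ ℰ a → P A ∈ ℰ (a + p)) :
    IsDeriv ℰ k (2 * p) (fun _ x y => mul x y) (fun x => P (P x))
      ↔ IsDeriv ℰ (k + p) p (lb k p P (fun _ x y => mul x y)) P := by
  have sg_even : ∀ m : ℤ, Even m → sg m = 1 := fun m h => by
    simp [sg, Int.negOnePow_even _ h]
  have sg_odd : ∀ m : ℤ, Odd m → sg m = -1 := fun m h => by
    simp [sg, Int.negOnePow_odd _ h]
  have hpp : Odd (p * p) := hp.mul hp
  simp only [IsDeriv, lb]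
  constructor
  · intro h a A B hA
    have h1 := h a A B hA
    rw [sg_even _ (by exact ⟨(a+k)*p, by ring⟩), one_smul] at h1
    have e2 : p * (a + p + k) = p * (a + k) + p * p := by ring
    have e3 : (a + (k + p)) * p = p * (a + k) + p * p := by ring
    rcases Int.even_or_odd (p * (a + k)) with he | ho
    · rw [sg_even _ he, sg_odd _ (by rw [e2]; exact he.add_odd hpp),
        sg_odd _ (by rw [e3]; exact he.add_odd hpp), one_smul, neg_one_smul,
        neg_one_smul]
      simp only [one_smul, map_add, map_sub]
      linear_combination (norm := abel) -h1
    · rw [sg_odd _ ho, sg_even _ (by rw [e2]; exact ho.add_odd hpp),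
        sg_even _ (by rw [e3]; exact ho.add_odd hpp), one_smul, neg_one_smul,
        one_smul]
      simp only [map_add, map_sub, map_neg]
      linear_combination (norm := abel) h1
  · intro h a A B hA
    have h1 := h a A B hA
    rw [sg_even _ (⟨(a+k)*p, by ring⟩ : Even ((a+k)*(2*p))), one_smul]
    have e2 : p * (a + p + k) = p * (a + k) + p * p := by ring
    have e3 : (a + (k + p)) * p = p * (a + k) + p * p := by ring
    rcases Int.even_or_odd (p * (a + k)) with he | ho
    · rw [sg_even _ he, sg_odd _ (by rw [e2]; exact he.add_odd hpp),
        sg_odd _ (by rw [e3]; exact he.add_odd hpp), one_smul, neg_one_smul,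
        neg_one_smul] at h1
      simp only [map_add, map_sub, map_neg] at h1
      linear_combination (norm := abel) -h1
    · rw [sg_odd _ ho, sg_even _ (by rw [e2]; exact ho.add_odd hpp),
        sg_even _ (by rw [e3]; exact ho.add_odd hpp), one_smul, neg_one_smul,
        one_smul] at h1
      simp only [map_add, map_sub, map_neg] at h1
      linear_combination (norm := abel) h1
end

section
/- The codifferential δ is a derivation of the Schouten bracket: −δ{A,B} = {δA, B} + (-1)^a {A, δB} for multivector fields A, B of degrees a, b. -/
/-- The Schouten bracket of multivector fields, expressed via the codifferential `δ`:
`{A,B} = δA ∧ B + (-1)^a A ∧ δB − δ(A∧B)`, for a homogeneous first argument of degree `a`. -/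
def schb {V : Type*} [AddCommGroup V] (wedge : V → V → V) (δ : V → V)
    (a : ℤ) (A B : V) : V :=
  wedge (δ A) B + sg a • wedge A (δ B) - δ (wedge A B)

/-- The codifferential `δ` (of degree `-1`, with `δ² = 0`) is a derivation of the Schouten
bracket: `−δ{A,B} = {δA, B} + (-1)^a {A, δB}` for homogeneous multivector fields `A, B`
of degrees `a, b`. -/
theorem codiff_deriv_schouten {V : Type*} [AddCommGroup V] [Module ℝ V]
    (grV : ℤ → Submodule ℝ V)
    (wedge : V →ₗ[ℝ] V →ₗ[ℝ] V)
    (hwedge : ∀ (a b : ℤ) (A B : V), A ∈ grV a → B ∈ grV b → wedge A B ∈ grV (a + b))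
    (δ : V →ₗ[ℝ] V) (hδ : ∀ (a : ℤ) (A : V), A ∈ grV a → δ A ∈ grV (a - 1))
    (hδδ : ∀ A : V, δ (δ A) = 0) :
    ∀ (a b : ℤ) (A B : V), A ∈ grV a → B ∈ grV b →
      -(δ (schb (fun x y => wedge x y) (fun x => δ x) a A B))
        = schb (fun x y => wedge x y) (fun x => δ x) (a - 1) (δ A) B
          + sg a • schb (fun x y => wedge x y) (fun x => δ x) a A (δ B) := by
  intro a b A B _ _
  have hsg : sg (a - 1) = -sg a := by
    simp [sg, Int.negOnePow_sub]
  simp only [schb, map_add, map_sub, map_zsmul, hδδ, map_zero, LinearMap.zero_apply,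
    LinearMap.map_zero, hsg, neg_smul, smul_add, smul_sub, smul_smul]
  have : sg a * sg a = 1 := by simp [sg, ← Units.val_mul]
  rw [this]
  abel
end
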